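/- Let R be a commutative ring and λ ∈ R with λ² = 1. Let A, B, C, D be λ-circulant n×n matrices over R satisfying (i) A·Aᵀ + B·Bᵀ + C·Cᵀ + D·Dᵀ = -I_n, (ii) C·Dᵀ - D·Cᵀ = 0, and (iii) -A·D·J + B·C·J - C·J·B + D·J·A = 0, where J is the back-diagonal matrix of order n. Let M be the 4n×4n block matrix with block rows (A, B, CJ, DJ), (-Bᵀ, Aᵀ, DJ, -CJ), (-CJ, -DJ, A, B), (-DJ, CJ, -Bᵀ, Aᵀ). Then M·Mᵀ = -I_{4n}. -/

import Mathlib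

/-!
λ-circulant matrices of order `n` are the polynomials in the λ-shift, so they commute with each
other; when `λ² = 1` the transpose of a λ-circulant is again λ-circulant; and, being Toeplitz,
every λ-circulant `X` satisfies `J Xᵀ = X J`. Writing `M = [[X, Y], [-Y, X]]`, the identity
`M Mᵀ = -1` reduces to `X Xᵀ + Y Yᵀ = -1` and `X Yᵀ = Y Xᵀ`. Moving every `J` to the right with
these rules, the first is (i) and (ii) blockwise, and the off-diagonal blocks of the second are (iii).
-/

open Matrix Polynomial

/-- The `l`-circulant matrix with first row `a`: each row is the `l`-cyclic
shift of the previous one (last entry wraps to the front multiplied by `l`). -/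
def lamCirc {R : Type*} [CommRing R] (n : ℕ) (l : R) (a : Fin n → R) :
    Matrix (Fin n) (Fin n) R :=
  fun i j =>
    if h : (i : ℕ) ≤ (j : ℕ) then a ⟨(j : ℕ) - (i : ℕ), by have := j.isLt; omega⟩
    else l * a ⟨n + (j : ℕ) - (i : ℕ), by have := i.isLt; have := j.isLt; omega⟩

/-- `A` is an `l`-circulant matrix. -/
def IsLamCirc {R : Type*} [CommRing R] (n : ℕ) (l : R) (A : Matrix (Fin n) (Fin n) R) : Prop :=
  ∃ a : Fin n → R, A = lamCirc n l a

/-- The back-diagonal permutation matrix `J` with `J_{i, n-i+1} = 1` (1-indexed). -/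
def backDiag {R : Type*} [CommRing R] (n : ℕ) : Matrix (Fin n) (Fin n) R :=
  fun i j => if (i : ℕ) + (j : ℕ) + 1 = n then 1 else 0

theorem fromBlocks_neg_mul_transpose_eq_neg_one {m α : Type*} [Fintype m] [DecidableEq m] [Ring α]
    {X Y : Matrix m m α} (h₁ : X * Xᵀ + Y * Yᵀ = -1) (h₂ : X * Yᵀ = Y * Xᵀ) :
    fromBlocks X Y (-Y) X * (fromBlocks X Y (-Y) X)ᵀ = -1 := by
  rw [fromBlocks_transpose, fromBlocks_multiply, ← fromBlocks_one, fromBlocks_neg]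
  simp only [transpose_neg, Matrix.mul_neg, Matrix.neg_mul, neg_neg, h₂, h₁, neg_zero,
    neg_add_cancel, add_comm (Y * Yᵀ)]

section LamCirc

variable {R : Type*} [CommRing R] {n : ℕ} {l : R}

theorem backDiag_eq_toMatrix_revPerm :
    (backDiag n : Matrix (Fin n) (Fin n) R) =
      (Fin.revPerm : Equiv.Perm (Fin n)).toPEquiv.toMatrix := by
  ext i j
  simp only [backDiag, PEquiv.toMatrix_apply, Equiv.toPEquiv_apply, Option.mem_def,
    Option.some.injEq, Fin.revPerm_apply, Fin.ext_iff, Fin.val_rev]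
  congr 1
  exact propext (by omega)

theorem backDiag_mul (M : Matrix (Fin n) (Fin n) R) : backDiag n * M = M.submatrix Fin.rev id := by
  rw [backDiag_eq_toMatrix_revPerm, PEquiv.toMatrix_toPEquiv_mul]
  rfl

theorem mul_backDiag (M : Matrix (Fin n) (Fin n) R) : M * backDiag n = M.submatrix id Fin.rev := by
  rw [backDiag_eq_toMatrix_revPerm, PEquiv.mul_toMatrix_toPEquiv, Fin.revPerm_symm]
  rfl

theorem backDiag_mul_backDiag : backDiag n * backDiag n = (1 : Matrix (Fin n) (Fin n) R) := by
  rw [backDiag_mul, backDiag_eq_toMatrix_revPerm]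
  ext i j
  simp [one_apply]

theorem transpose_backDiag : (backDiag n : Matrix (Fin n) (Fin n) R)ᵀ = backDiag n := by
  rw [backDiag_eq_toMatrix_revPerm, ← PEquiv.toMatrix_symm, ← Equiv.toPEquiv_symm, Fin.revPerm_symm]

theorem mul_backDiag_inj {P Q : Matrix (Fin n) (Fin n) R} :
    P * backDiag n = Q * backDiag n ↔ P = Q := by
  refine ⟨fun h => ?_, congrArg (· * backDiag n)⟩
  rw [← Matrix.mul_one P, ← Matrix.mul_one Q, ← backDiag_mul_backDiag, ← Matrix.mul_assoc,
    ← Matrix.mul_assoc, h]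

theorem lamCirc_apply (a : Fin n → R) (i j : Fin n) :
    lamCirc n l a i j = (if i ≤ j then 1 else l) * a (j - i) := by
  unfold lamCirc
  by_cases h : i ≤ j
  · rw [dif_pos (Fin.le_def.mp h), if_pos h, one_mul]
    congr 1; ext; rw [Fin.coe_sub_iff_le.mpr h]
  · rw [dif_neg (mt Fin.le_def.mpr h), if_neg h]
    congr 2; ext; rw [Fin.coe_sub_iff_lt.mpr (not_le.mp h)]

-- Both sides are `l ^ w`, where `w` counts the wrap-arounds in `(k - i) + (j - k) = j - i`.
theorem wrap_factor_mul_eq {i j k k' : Fin n} (h₁ : k' - i = j - k) (h₂ : j - k' = k - i) :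
    (if i ≤ k then 1 else l) * (if k ≤ j then 1 else l)
      = (if i ≤ k' then 1 else l) * (if k' ≤ j then 1 else l) := by
  have v (a b : Fin n) :
      ((a - b : Fin n) : ℕ) = if b ≤ a then (a : ℕ) - (b : ℕ) else n + (a : ℕ) - (b : ℕ) := by
    split_ifs with h
    · exact Fin.coe_sub_iff_le.mpr h
    · exact Fin.coe_sub_iff_lt.mpr (not_le.mp h)
  have e₁ := congrArg Fin.val h₁
  have e₂ := congrArg Fin.val h₂
  rw [v, v] at e₁ e₂
  simp only [Fin.le_def] at *
  split_ifs at * <;> first | omega | ring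

theorem lamCirc_mul_comm (a b : Fin n → R) :
    lamCirc n l a * lamCirc n l b = lamCirc n l b * lamCirc n l a := by
  cases n with
  | zero => exact Matrix.ext fun i => i.elim0
  | succ n =>
    ext i j
    simp only [mul_apply, lamCirc_apply]
    refine Fintype.sum_equiv (Equiv.subLeft (i + j)) _ _ fun k => ?_
    have h₁ : (i + j - k) - i = j - k := by abel
    have h₂ : j - (i + j - k) = k - i := by abel
    rw [Equiv.subLeft_apply, h₁, h₂]
    linear_combination (a (k - i) * b (j - k)) * wrap_factor_mul_eq (l := l) h₁ h₂

theorem lamCirc_transpose (hl : l ^ 2 = 1) (a : Fin (n + 1) → R) :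
    (lamCirc (n + 1) l a)ᵀ = lamCirc (n + 1) l (fun m => if m = 0 then a 0 else l * a (-m)) := by
  ext i j
  rw [transpose_apply, lamCirc_apply, lamCirc_apply, neg_sub]
  rcases lt_trichotomy i j with h | rfl | h
  · simp [h.le, h.not_ge, sub_eq_zero, h.ne']
  · simp
  · simp [h.le, h.not_ge, sub_eq_zero, h.ne]
    linear_combination (- a (i - j)) * hl

theorem backDiag_mul_transpose_lamCirc (a : Fin n → R) :
    backDiag n * (lamCirc n l a)ᵀ = lamCirc n l a * backDiag n := by
  rw [backDiag_mul, mul_backDiag]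
  ext i j
  have : Fin.rev i - j = Fin.rev j - i := by
    ext; simp only [Fin.val_sub, Fin.val_rev]; congr 1; omega
  simp only [submatrix_apply, transpose_apply, id, lamCirc_apply, Fin.le_rev_iff, this]

namespace IsLamCirc

variable {A B C D : Matrix (Fin n) (Fin n) R}

theorem mul_comm (hA : IsLamCirc n l A) (hB : IsLamCirc n l B) : A * B = B * A := by
  obtain ⟨a, rfl⟩ := hA
  obtain ⟨b, rfl⟩ := hB
  exact lamCirc_mul_comm a b

theorem transpose (hl : l ^ 2 = 1) (hA : IsLamCirc n l A) : IsLamCirc n l Aᵀ := by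
  obtain ⟨a, rfl⟩ := hA
  cases n with
  | zero => exact ⟨a, Matrix.ext fun i => i.elim0⟩
  | succ n => exact ⟨_, lamCirc_transpose hl a⟩

theorem backDiag_mul_transpose (hA : IsLamCirc n l A) : backDiag n * Aᵀ = A * backDiag n := by
  obtain ⟨a, rfl⟩ := hA
  exact backDiag_mul_transpose_lamCirc a

theorem transpose_mul_backDiag (hA : IsLamCirc n l A) : Aᵀ * backDiag n = backDiag n * A := by
  calc Aᵀ * backDiag n = backDiag n * (backDiag n * Aᵀ) * backDiag n := by
        rw [← Matrix.mul_assoc, backDiag_mul_backDiag, Matrix.one_mul]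
    _ = backDiag n * A := by
        rw [hA.backDiag_mul_transpose, Matrix.mul_assoc, Matrix.mul_assoc, backDiag_mul_backDiag,
          Matrix.mul_one]

theorem isSymm_mul_backDiag (hA : IsLamCirc n l A) : (A * backDiag n).IsSymm := by
  rw [IsSymm, transpose_mul, transpose_backDiag, hA.backDiag_mul_transpose]

theorem mul_backDiag_mul_transpose (X : Matrix (Fin n) (Fin n) R) (hA : IsLamCirc n l A) :
    X * backDiag n * Aᵀ = X * A * backDiag n := by
  rw [Matrix.mul_assoc, hA.backDiag_mul_transpose, Matrix.mul_assoc]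

theorem mul_backDiag_mul (X : Matrix (Fin n) (Fin n) R) (hA : IsLamCirc n l A) :
    X * backDiag n * A = X * Aᵀ * backDiag n := by
  rw [Matrix.mul_assoc, ← hA.transpose_mul_backDiag, Matrix.mul_assoc]

theorem mul_backDiag_mul_mul_backDiag (X : Matrix (Fin n) (Fin n) R) (hA : IsLamCirc n l A) :
    X * backDiag n * (A * backDiag n) = X * Aᵀ := by
  rw [Matrix.mul_assoc, ← Matrix.mul_assoc _ A, ← hA.transpose_mul_backDiag, Matrix.mul_assoc,
    backDiag_mul_backDiag, Matrix.mul_one]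

theorem fromBlocks_mul_transpose (hl : l ^ 2 = 1) (hA : IsLamCirc n l A) (hB : IsLamCirc n l B) :
    fromBlocks A B (-Bᵀ) Aᵀ * (fromBlocks A B (-Bᵀ) Aᵀ)ᵀ
      = fromBlocks (A * Aᵀ + B * Bᵀ) 0 0 (A * Aᵀ + B * Bᵀ) := by
  rw [fromBlocks_transpose, fromBlocks_multiply]
  simp only [transpose_neg, transpose_transpose, Matrix.mul_neg, Matrix.neg_mul, neg_neg]
  rw [hA.mul_comm hB, (hA.transpose hl).mul_comm hA, (hB.transpose hl).mul_comm hB,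
    (hA.transpose hl).mul_comm (hB.transpose hl), neg_add_cancel, neg_add_cancel, add_comm]

theorem fromBlocks_backDiag_mul_transpose (hC : IsLamCirc n l C) (hD : IsLamCirc n l D) :
    fromBlocks (C * backDiag n) (D * backDiag n) (D * backDiag n) (-(C * backDiag n)) *
        (fromBlocks (C * backDiag n) (D * backDiag n) (D * backDiag n) (-(C * backDiag n)))ᵀ
      = fromBlocks (C * Cᵀ + D * Dᵀ) (C * Dᵀ - D * Cᵀ) (D * Cᵀ - C * Dᵀ) (D * Dᵀ + C * Cᵀ) := by
  rw [fromBlocks_transpose, fromBlocks_multiply]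
  simp only [transpose_neg, hC.isSymm_mul_backDiag.eq, hD.isSymm_mul_backDiag.eq,
    Matrix.mul_neg, Matrix.neg_mul, neg_neg, hC.mul_backDiag_mul_mul_backDiag,
    hD.mul_backDiag_mul_mul_backDiag, sub_eq_add_neg]

theorem fromBlocks_mul_transpose_comm (hl : l ^ 2 = 1) (hA : IsLamCirc n l A)
    (hB : IsLamCirc n l B) (hC : IsLamCirc n l C) (hD : IsLamCirc n l D)
    (h : -(A * D * backDiag n) + B * C * backDiag n - C * backDiag n * B
        + D * backDiag n * A = 0) :
    fromBlocks A B (-Bᵀ) Aᵀ *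
        (fromBlocks (C * backDiag n) (D * backDiag n) (D * backDiag n) (-(C * backDiag n)))ᵀ
      = fromBlocks (C * backDiag n) (D * backDiag n) (D * backDiag n) (-(C * backDiag n)) *
        (fromBlocks A B (-Bᵀ) Aᵀ)ᵀ := by
  have h₀ : -(A * D) + B * C - C * Bᵀ + D * Aᵀ = 0 := by
    rw [← mul_backDiag_inj, Matrix.zero_mul, ← h, hB.mul_backDiag_mul, hA.mul_backDiag_mul]
    simp only [Matrix.add_mul, Matrix.sub_mul, Matrix.neg_mul]
  rw [fromBlocks_transpose, fromBlocks_transpose, fromBlocks_multiply, fromBlocks_multiply]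
  simp only [transpose_neg, transpose_transpose, hC.isSymm_mul_backDiag.eq,
    hD.isSymm_mul_backDiag.eq, Matrix.mul_neg, Matrix.neg_mul, ← Matrix.mul_assoc,
    hA.mul_backDiag_mul_transpose, hB.mul_backDiag_mul_transpose, hA.mul_backDiag_mul,
    hB.mul_backDiag_mul]
  simp only [← Matrix.add_mul, ← Matrix.neg_mul, mul_backDiag_inj, fromBlocks_inj]
  simp only [Matrix.neg_mul]
  have hAt := hA.transpose hl
  have hBt := hB.transpose hl
  refine ⟨?_, ?_, ?_, ?_⟩
  · rw [hA.mul_comm hC, hB.mul_comm hD]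
  · rw [← sub_eq_zero, ← neg_eq_zero, ← h₀]
    noncomm_ring
  · rw [hBt.mul_comm hC, hAt.mul_comm hD, hD.mul_comm hA, hC.mul_comm hB, ← sub_eq_zero, ← h₀]
    noncomm_ring
  · rw [hBt.mul_comm hD, hAt.mul_comm hC]

end IsLamCirc

end LamCirc

/-- Construction II (variation of the short Kharaghani array): M·Mᵀ = -I. -/
theorem construction_II_matrix {R : Type*} [CommRing R] {n : ℕ} (l : R) (hl : l ^ 2 = 1)
    (A B C D : Matrix (Fin n) (Fin n) R)
    (hA : IsLamCirc n l A) (hB : IsLamCirc n l B)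
    (hC : IsLamCirc n l C) (hD : IsLamCirc n l D)
    (h1 : A * Aᵀ + B * Bᵀ + C * Cᵀ + D * Dᵀ = -1)
    (h2 : C * Dᵀ - D * Cᵀ = 0)
    (h3 : -(A * D * backDiag n) + B * C * backDiag n - C * backDiag n * B
        + D * backDiag n * A = 0) :
    let J : Matrix (Fin n) (Fin n) R := backDiag n
    let M : Matrix ((Fin n ⊕ Fin n) ⊕ (Fin n ⊕ Fin n)) ((Fin n ⊕ Fin n) ⊕ (Fin n ⊕ Fin n)) R :=
      Matrix.fromBlocks
        (Matrix.fromBlocks A B (-Bᵀ) Aᵀ)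
        (Matrix.fromBlocks (C * J) (D * J) (D * J) (-(C * J)))
        (Matrix.fromBlocks (-(C * J)) (-(D * J)) (-(D * J)) (C * J))
        (Matrix.fromBlocks A B (-Bᵀ) Aᵀ)
    M * Mᵀ = -1 := by
  intro J M
  have hX := IsLamCirc.fromBlocks_mul_transpose hl hA hB
  have hY := IsLamCirc.fromBlocks_backDiag_mul_transpose hC hD
  have hXY := IsLamCirc.fromBlocks_mul_transpose_comm hl hA hB hC hD h3
  have hM : M = fromBlocks (fromBlocks A B (-Bᵀ) Aᵀ)
      (fromBlocks (C * J) (D * J) (D * J) (-(C * J)))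
      (-fromBlocks (C * J) (D * J) (D * J) (-(C * J))) (fromBlocks A B (-Bᵀ) Aᵀ) := by
    rw [fromBlocks_neg, neg_neg]
  rw [hM]
  refine fromBlocks_neg_mul_transpose_eq_neg_one ?_ hXY
  rw [hX, hY, fromBlocks_add, ← fromBlocks_one, fromBlocks_neg, neg_zero, zero_add, zero_add]
  refine fromBlocks_inj.mpr ⟨?_, h2, by rw [← neg_sub, h2, neg_zero], ?_⟩ <;>
  · rw [← h1]; abel
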